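/- arXiv:1911.10234 — 2 statements merged into one kernel-verified Lean document; each statement's English description precedes it below -/
import Mathlib

section
/- Let T be a finite tree, P an automorphism of T, and u, v adjacent vertices of T lying in distinct orbits of P, with orbit cardinalities p and q respectively. Then the orbit of the edge uv under the action of P induced on edges has cardinality equal to max(p, q). -/
/-!
The pair `(P^k u, P^k v)` returns to `(u, v)` exactly when `k` is a multiple of both orbit
lengths, and since the orbits of `u` and `v` are disjoint, the unordered edge determines the
ordered pair; so the edge orbit has `lcm p q` elements. These edges form a subforest of `T` on the
at most `p + q` vertices of the two orbits, so there are fewer than `p + q` of them. A positive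
multiple of `max p q` below `p + q ≤ 2 * max p q` is `max p q` itself.
-/

open Function Set MulAction Subgroup

section ZPowOrbit

variable {G α : Type*} [Group G] [MulAction G α]

theorem range_zpow_smul_eq_orbit (g : G) (x : α) :
    range (fun k : ℤ => g ^ k • x) = orbit (zpowers g) x := by
  ext y
  simp only [mem_range, mem_orbit_iff, Subtype.exists, mem_zpowers_iff, exists_prop,
    exists_exists_eq_and, Subgroup.mk_smul]

theorem ncard_range_zpow_smul (g : G) (x : α) :
    (range fun k : ℤ => g ^ k • x).ncard = minimalPeriod (g • ·) x := by
  rw [range_zpow_smul_eq_orbit, ← Nat.card_coe_set_eq, Nat.card_congr (orbitZPowersEquiv g x),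
    Nat.card_zmod]

end ZPowOrbit

namespace Equiv.Perm

variable {α : Type*}

theorem range_zpow_apply_eq_orbit (σ : Perm α) (x : α) :
    range (fun k : ℤ => (σ ^ k) x) = orbit (zpowers σ) x :=
  range_zpow_smul_eq_orbit σ x

theorem ncard_range_zpow_apply (σ : Perm α) (x : α) :
    (range fun k : ℤ => (σ ^ k) x).ncard = minimalPeriod σ x :=
  ncard_range_zpow_smul σ x

theorem zpow_apply_ne_zpow_apply_of_orbit_ne {σ : Perm α} {x y : α}
    (hxy : orbit (zpowers σ) x ≠ orbit (zpowers σ) y) (k j : ℤ) : (σ ^ k) x ≠ (σ ^ j) y := by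
  intro h
  apply hxy
  rw [← orbit_smul (⟨σ ^ k, zpow_mem_zpowers σ k⟩ : zpowers σ) x,
    ← orbit_smul (⟨σ ^ j, zpow_mem_zpowers σ j⟩ : zpowers σ) y]
  exact congrArg _ h

theorem ncard_range_sym2_zpow_apply {σ : Perm α} {x y : α}
    (hxy : orbit (zpowers σ) x ≠ orbit (zpowers σ) y) :
    (range fun k : ℤ => s((σ ^ k) x, (σ ^ k) y)).ncard =
      (minimalPeriod σ x).lcm (minimalPeriod σ y) := by
  have hrange : (range fun k : ℤ => s((σ ^ k) x, (σ ^ k) y)) =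
      uncurry Sym2.mk '' range (fun k : ℤ => σ ^ k • (x, y)) := by
    rw [← range_comp]; rfl
  have hinj : InjOn (uncurry Sym2.mk) (range fun k : ℤ => σ ^ k • (x, y)) := by
    rintro _ ⟨k, rfl⟩ _ ⟨j, rfl⟩ h
    rcases Sym2.mk_eq_mk_iff.mp h with h | h
    · exact h
    · exact absurd (congrArg Prod.fst h) (zpow_apply_ne_zpow_apply_of_orbit_ne hxy k j)
  rw [hrange, hinj.ncard_image, ncard_range_zpow_smul]
  exact minimalPeriod_prodMap σ σ (x, y)

end Equiv.Perm

theorem Nat.lcm_eq_max_of_lcm_lt_add {m n : ℕ} (hm : 0 < m) (hn : 0 < n)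
    (h : m.lcm n < m + n) : m.lcm n = max m n := by
  refine Nat.eq_of_dvd_of_lt_two_mul (Nat.lcm_ne_zero hm.ne' hn.ne') ?_ (by omega)
  rcases le_total m n with hle | hle
  · simpa [max_eq_right hle] using Nat.dvd_lcm_right m n
  · simpa [max_eq_left hle] using Nat.dvd_lcm_left m n

namespace SimpleGraph

variable {V : Type*} {G : SimpleGraph V}

theorem adj_zpow_apply_iff {P : Equiv.Perm V} (hP : ∀ x y, G.Adj x y ↔ G.Adj (P x) (P y))
    (k : ℤ) {x y : V} : G.Adj ((P ^ k) x) ((P ^ k) y) ↔ G.Adj x y := by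
  induction k using Int.induction_on generalizing x y with
  | zero => simp
  | succ i ih => rw [zpow_add_one, Equiv.Perm.mul_apply, Equiv.Perm.mul_apply, ih, ← hP]
  | pred i ih =>
    rw [zpow_sub_one, Equiv.Perm.mul_apply, Equiv.Perm.mul_apply, ih, hP]
    simp

theorem IsAcyclic.ncard_edgeSet_lt [Finite V] [Nonempty V] (hG : G.IsAcyclic) :
    G.edgeSet.ncard < Nat.card V := by
  obtain ⟨T, hGT, -, hT⟩ := connected_top.exists_isTree_le_of_le_of_isAcyclic le_top hG
  have := Fintype.ofFinite V
  classical
  calc G.edgeSet.ncard ≤ T.edgeSet.ncard := ncard_le_ncard (edgeSet_mono hGT)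
    _ < Nat.card V := by
      rw [Nat.card_eq_fintype_card, ← hT.card_edgeFinset, ← coe_edgeFinset, ncard_coe_finset]
      omega

theorem IsAcyclic.ncard_lt_of_subset_edgeSet (hG : G.IsAcyclic) {s : Set V} (hs : s.Finite)
    (hne : s.Nonempty) {E : Set (Sym2 V)} (hE : E ⊆ G.edgeSet) (hEs : ∀ e ∈ E, ∀ x ∈ e, x ∈ s) :
    E.ncard < s.ncard := by
  have := hs.to_subtype
  have := hne.to_subtype
  have hsub : E ⊆ Sym2.map (↑) '' (G.induce s).edgeSet := by
    intro e he
    induction e using Sym2.ind with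
    | h x y =>
      refine ⟨s(⟨x, hEs _ he x (Sym2.mem_mk_left x y)⟩, ⟨y, hEs _ he y (Sym2.mem_mk_right x y)⟩),
        ?_, rfl⟩
      simpa using hE he
  calc E.ncard ≤ (Sym2.map (↑) '' (G.induce s).edgeSet).ncard :=
        ncard_le_ncard hsub ((toFinite _).image _)
    _ ≤ (G.induce s).edgeSet.ncard := ncard_image_le (toFinite _)
    _ < s.ncard := by
      rw [← Nat.card_coe_set_eq]
      exact (hG.induce s).ncard_edgeSet_lt

end SimpleGraph

/-- Let `T` be a finite tree, `P` an automorphism of `T`, and `u, v` adjacent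
vertices of `T` lying in distinct orbits of `P`, with orbit cardinalities `p` and `q`
respectively. Then the orbit of the edge `uv` under the action of `P` induced on edges has
cardinality equal to `max p q`. -/
theorem stmt_3 {V : Type*} [Fintype V] (G : SimpleGraph V) (hG : G.IsTree)
    (P : Equiv.Perm V) (hP : ∀ x y : V, G.Adj x y ↔ G.Adj (P x) (P y))
    (u v : V) (huv : G.Adj u v)
    (hne : (Set.range fun k : ℤ => (P ^ k) u) ≠ (Set.range fun k : ℤ => (P ^ k) v))
    (p q : ℕ)
    (hp : p = (Set.range fun k : ℤ => (P ^ k) u).ncard)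
    (hq : q = (Set.range fun k : ℤ => (P ^ k) v).ncard) :
    (Set.range fun k : ℤ => s((P ^ k) u, (P ^ k) v)).ncard = max p q := by
  have hp_pos : 0 < p := hp ▸ (ncard_pos (toFinite _)).mpr (range_nonempty _)
  have hq_pos : 0 < q := hq ▸ (ncard_pos (toFinite _)).mpr (range_nonempty _)
  have hedges : (range fun k : ℤ => s((P ^ k) u, (P ^ k) v)).ncard = p.lcm q := by
    rw [hp, hq, Equiv.Perm.ncard_range_zpow_apply, Equiv.Perm.ncard_range_zpow_apply]
    refine Equiv.Perm.ncard_range_sym2_zpow_apply ?_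
    simpa only [Equiv.Perm.range_zpow_apply_eq_orbit] using hne
  have hforest : (range fun k : ℤ => s((P ^ k) u, (P ^ k) v)).ncard < p + q := calc
    _ < ((range fun k : ℤ => (P ^ k) u) ∪ range fun k : ℤ => (P ^ k) v).ncard := by
      refine hG.isAcyclic.ncard_lt_of_subset_edgeSet (toFinite _) ⟨u, .inl ⟨0, rfl⟩⟩ ?_ ?_
      · rintro _ ⟨k, rfl⟩
        exact (SimpleGraph.adj_zpow_apply_iff hP k).mpr huv
      · rintro _ ⟨k, rfl⟩ x hx
        rcases Sym2.mem_iff.mp hx with rfl | rfl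
        exacts [.inl ⟨k, rfl⟩, .inr ⟨k, rfl⟩]
    _ ≤ p + q := hp ▸ hq ▸ ncard_union_le _ _
  rw [hedges] at hforest ⊢
  exact Nat.lcm_eq_max_of_lcm_lt_add hp_pos hq_pos hforest
end

section
/- Let n ≥ 4 and define b₊ : ℝⁿ → ℝⁿ by b₊(x₁, x₂, …, x_{n-1}, x_n) = (2x₁, x₂/2, …, x_{n-1}/2, x_n/2). Let 𝕌 = {x ∈ ℝⁿ : x₁²(x₂² + ⋯ + x_n²) ≤ 1} and ℕˢ = 𝕌 ∖ {x : x₂ = x₃ = ⋯ = x_n = 0} (the complement in 𝕌 of the x₁-axis); the set ℕˢ is invariant under b₊, and ℤ acts on ℕˢ by k · x = b₊^k(x). Then the quotient space ℕˢ/ℤ (with the quotient topology) is homeomorphic to the product S^{n-2} × S¹ × [−1, 1]. -/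
/-!
Write a point of `ℝⁿ` as `(s, y) ∈ ℝ × ℝⁿ⁻¹`. Then `b₊` is the hyperbolic scaling
`(s, y) ↦ (2s, y/2)`, `ℕˢ` is the region `s²‖y‖² ≤ 1, y ≠ 0`, and the map
`(s, y) ↦ (y/‖y‖, exp (2πi log₂ ‖y‖), s‖y‖)` onto `S^{n-2} × S¹ × [-1, 1]` is continuous and
surjective, with the `b₊`-orbits as its fibres: `b₊` halves `‖y‖`, shifting `log₂ ‖y‖` by one turn.
Every orbit meets the compact shell `1 ≤ ‖y‖ ≤ 2`, so the orbit space is compact and the induced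
continuous bijection onto a Hausdorff space is a homeomorphism.
-/

open Metric Real Set

theorem Quot.compactSpace_of_isCompact {X : Type*} [TopologicalSpace X] {r : X → X → Prop}
    {K : Set X} (hK : IsCompact K) (hKr : ∀ x, ∃ y ∈ K, Relation.EqvGen r x y) :
    CompactSpace (Quot r) := by
  refine ⟨?_⟩
  have hK_onto : Quot.mk r '' K = univ := by
    refine eq_univ_of_forall fun q => Quot.ind (fun x => ?_) q
    obtain ⟨y, hyK, hxy⟩ := hKr x
    exact ⟨y, hyK, (Quot.eqvGen_sound hxy).symm⟩
  exact hK_onto ▸ hK.image continuous_quot_mk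

theorem Quot.nonempty_homeomorph_of_isCompact {X Y : Type*} [TopologicalSpace X]
    [TopologicalSpace Y] [T2Space Y] {r : X → X → Prop} {f : X → Y} (hf : Continuous f)
    (hsurj : Function.Surjective f) (hr : ∀ a b, r a b → f a = f b)
    (hfib : ∀ a b, f a = f b → Relation.EqvGen r a b) {K : Set X} (hK : IsCompact K)
    (hKr : ∀ x, ∃ y ∈ K, Relation.EqvGen r x y) : Nonempty (Quot r ≃ₜ Y) := by
  have := Quot.compactSpace_of_isCompact hK hKr
  have hbij : Function.Bijective (Quot.lift f hr) := by
    refine ⟨fun p q => Quot.induction_on₂ p q fun a b hab => Quot.eqvGen_sound (hfib a b hab),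
      fun y => ?_⟩
    obtain ⟨x, rfl⟩ := hsurj y
    exact ⟨Quot.mk r x, rfl⟩
  exact ⟨(continuous_quot_lift hr hf).homeoOfEquivCompactToT2 (f := .ofBijective _ hbij)⟩

theorem Circle.exp_two_pi_mul_logb_eq_iff {b r r' : ℝ} (hb : 0 < b) (hb₁ : b ≠ 1) (hr : 0 < r)
    (hr' : 0 < r') :
    Circle.exp (2 * π * logb b r) = Circle.exp (2 * π * logb b r') ↔ ∃ k : ℤ, r = b ^ k * r' := by
  rw [Circle.exp_eq_exp]
  constructor
  · rintro ⟨k, hk⟩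
    have hlog : logb b r = k + logb b r' := by nlinarith [pi_pos]
    refine ⟨k, ?_⟩
    rw [← rpow_logb hb hb₁ hr, hlog, rpow_add hb, rpow_intCast, rpow_logb hb hb₁ hr']
  · rintro ⟨k, rfl⟩
    refine ⟨k, ?_⟩
    rw [logb_mul (zpow_ne_zero _ hb.ne') hr'.ne', ← rpow_intCast, logb_rpow hb hb₁]
    ring

theorem Int.exists_inv_zpow_mul_mem_Ico {b : ℕ} (hb : 1 < b) {r : ℝ} (hr : 0 < r) :
    ∃ k : ℤ, ((b : ℝ) ^ k)⁻¹ * r ∈ Ico 1 (b : ℝ) := by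
  have hbk : (0 : ℝ) < (b : ℝ) ^ Int.log b r := zpow_pos (Nat.cast_pos.2 (by omega)) _
  refine ⟨Int.log b r, ?_, ?_⟩
  · rw [le_inv_mul_iff₀ hbk, mul_one]
    exact Int.zpow_log_le_self hb hr
  · rw [inv_mul_lt_iff₀ hbk, ← zpow_add_one₀ (by positivity)]
    exact Int.lt_zpow_succ_log_self hb r

section HyperbolicScale

variable {E : Type*}

noncomputable def hyperbolicScale [AddCommGroup E] [Module ℝ E] (t : ℝ) (p : ℝ × E) : ℝ × E :=
  (t * p.1, t⁻¹ • p.2)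

@[simp] theorem hyperbolicScale_one [AddCommGroup E] [Module ℝ E] (p : ℝ × E) :
    hyperbolicScale 1 p = p := by
  simp [hyperbolicScale]

theorem hyperbolicScale_hyperbolicScale [AddCommGroup E] [Module ℝ E] (t u : ℝ) (p : ℝ × E) :
    hyperbolicScale t (hyperbolicScale u p) = hyperbolicScale (t * u) p := by
  simp only [hyperbolicScale, mul_assoc, smul_smul, mul_inv, mul_comm t⁻¹]

variable [NormedAddCommGroup E]

def hyperbolicRegion (E : Type*) [NormedAddCommGroup E] : Set (ℝ × E) :=
  {p | p.1 ^ 2 * ‖p.2‖ ^ 2 ≤ 1 ∧ p.2 ≠ 0}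

theorem fst_mul_norm_snd_mem_Icc {p : ℝ × E} (hp : p ∈ hyperbolicRegion E) :
    p.1 * ‖p.2‖ ∈ Icc (-1 : ℝ) 1 :=
  abs_le.1 (sq_le_one_iff_abs_le_one _ |>.1 (by rw [mul_pow]; exact hp.1))

theorem isCompact_hyperbolicRegion_inter_norm_snd_Icc [ProperSpace E] :
    IsCompact (hyperbolicRegion E ∩ {p | ‖p.2‖ ∈ Icc 1 2}) := by
  have hset : hyperbolicRegion E ∩ {p | ‖p.2‖ ∈ Icc 1 2} =
      {p : ℝ × E | p.1 ^ 2 * ‖p.2‖ ^ 2 ≤ 1} ∩ (fun p => ‖p.2‖) ⁻¹' Icc 1 2 := by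
    ext p
    simp only [hyperbolicRegion, mem_inter_iff, mem_ofPred_eq, mem_preimage, and_assoc]
    refine and_congr_right fun _ => ⟨fun h => h.2, fun h => ⟨?_, h⟩⟩
    exact norm_ne_zero_iff.1 (by linarith [h.1])
  have hbox : IsCompact (Icc (-1 : ℝ) 1 ×ˢ closedBall (0 : E) 2) :=
    isCompact_Icc.prod (isCompact_closedBall 0 2)
  refine hbox.of_isClosed_subset ?_ ?_
  · rw [hset]
    exact (isClosed_le (by fun_prop) continuous_const).inter (isClosed_Icc.preimage (by fun_prop))
  · rintro p ⟨⟨hp, -⟩, h1, h2⟩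
    refine ⟨sq_le_one_iff_abs_le_one _ |>.1 ?_ |> abs_le.1, mem_closedBall_zero_iff.2 h2⟩
    calc p.1 ^ 2 = p.1 ^ 2 * 1 ^ 2 := by ring
      _ ≤ p.1 ^ 2 * ‖p.2‖ ^ 2 := by gcongr
      _ ≤ 1 := hp

variable [NormedSpace ℝ E]

theorem norm_hyperbolicScale_snd {t : ℝ} (ht : 0 < t) (p : ℝ × E) :
    ‖(hyperbolicScale t p).2‖ = t⁻¹ * ‖p.2‖ := by
  rw [hyperbolicScale, norm_smul, norm_inv, norm_of_nonneg ht.le]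

theorem hyperbolicScale_fst_mul_norm_snd {t : ℝ} (ht : 0 < t) (p : ℝ × E) :
    (hyperbolicScale t p).1 * ‖(hyperbolicScale t p).2‖ = p.1 * ‖p.2‖ := by
  rw [norm_hyperbolicScale_snd ht, hyperbolicScale]
  field_simp

theorem hyperbolicScale_mem_hyperbolicRegion {t : ℝ} (ht : 0 < t) {p : ℝ × E}
    (hp : p ∈ hyperbolicRegion E) : hyperbolicScale t p ∈ hyperbolicRegion E := by
  refine ⟨?_, smul_ne_zero (inv_ne_zero ht.ne') hp.2⟩
  rw [← mul_pow, hyperbolicScale_fst_mul_norm_snd ht, mul_pow]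
  exact hp.1

theorem inv_norm_smul_mem_sphere {y : E} (hy : y ≠ 0) : ‖y‖⁻¹ • y ∈ sphere (0 : E) 1 := by
  rw [mem_sphere_zero_iff_norm, norm_smul, norm_inv, norm_norm,
    inv_mul_cancel₀ (norm_ne_zero_iff.2 hy)]

noncomputable def hyperbolicInvariant (a : hyperbolicRegion E) :
    sphere (0 : E) 1 × Circle × Icc (-1 : ℝ) 1 :=
  (⟨‖a.1.2‖⁻¹ • a.1.2, inv_norm_smul_mem_sphere a.2.2⟩, Circle.exp (2 * π * logb 2 ‖a.1.2‖),
    ⟨a.1.1 * ‖a.1.2‖, fst_mul_norm_snd_mem_Icc a.2⟩)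

theorem continuous_hyperbolicInvariant : Continuous (hyperbolicInvariant (E := E)) := by
  have hy : Continuous fun a : hyperbolicRegion E => a.1.2 := by fun_prop
  have hy₀ : ∀ a : hyperbolicRegion E, ‖a.1.2‖ ≠ 0 := fun a => norm_ne_zero_iff.2 a.2.2
  refine .prodMk (.subtype_mk ((hy.norm.inv₀ hy₀).smul hy) _) (.prodMk ?_ (.subtype_mk ?_ _))
  · exact Circle.exp.continuous.comp (continuous_const.mul (hy.norm.logb hy₀))
  · fun_prop

theorem inv_norm_smul_hyperbolicScale_snd {t : ℝ} (ht : 0 < t) (p : ℝ × E) :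
    ‖(hyperbolicScale t p).2‖⁻¹ • (hyperbolicScale t p).2 = ‖p.2‖⁻¹ • p.2 := by
  rw [norm_hyperbolicScale_snd ht, hyperbolicScale, smul_smul]
  congr 1
  field_simp

theorem Prod.eq_of_inv_norm_smul_snd_eq {p q : ℝ × E} (hq : q.2 ≠ 0)
    (hdir : ‖p.2‖⁻¹ • p.2 = ‖q.2‖⁻¹ • q.2) (hnorm : ‖p.2‖ = ‖q.2‖)
    (hprod : p.1 * ‖p.2‖ = q.1 * ‖q.2‖) : p = q := by
  have hq₀ : ‖q.2‖ ≠ 0 := norm_ne_zero_iff.2 hq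
  have hp : p.2 ≠ 0 := norm_ne_zero_iff.1 (hnorm ▸ hq₀)
  refine Prod.ext (mul_right_cancel₀ hq₀ (hnorm ▸ hprod)) ?_
  calc p.2 = ‖p.2‖ • (‖p.2‖⁻¹ • p.2) := (smul_inv_smul₀ (norm_ne_zero_iff.2 hp) _).symm
    _ = ‖q.2‖ • (‖q.2‖⁻¹ • q.2) := by rw [hdir, hnorm]
    _ = q.2 := smul_inv_smul₀ hq₀ _

theorem hyperbolicInvariant_eq_iff {a b : hyperbolicRegion E} :
    hyperbolicInvariant b = hyperbolicInvariant a ↔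
      ∃ k : ℤ, (b : ℝ × E) = hyperbolicScale (2 ^ k) a := by
  have hpos (c : hyperbolicRegion E) : 0 < ‖c.1.2‖ := norm_pos_iff.2 c.2.2
  have hcirc := Circle.exp_two_pi_mul_logb_eq_iff two_pos (by norm_num) (hpos b) (hpos a)
  simp only [hyperbolicInvariant, Prod.mk.injEq, Subtype.mk.injEq]
  constructor
  · rintro ⟨hdir, hexp, hprod⟩
    obtain ⟨j, hj⟩ := hcirc.1 hexp
    have hk : (0 : ℝ) < 2 ^ (-j) := zpow_pos two_pos _
    refine ⟨-j, Prod.eq_of_inv_norm_smul_snd_eq (smul_ne_zero (inv_ne_zero hk.ne') a.2.2) ?_ ?_ ?_⟩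
    · rw [inv_norm_smul_hyperbolicScale_snd hk, hdir]
    · rw [norm_hyperbolicScale_snd hk, zpow_neg, inv_inv, hj]
    · rw [hyperbolicScale_fst_mul_norm_snd hk, hprod]
  · rintro ⟨k, hb⟩
    have hk : (0 : ℝ) < 2 ^ k := zpow_pos two_pos _
    refine ⟨?_, hcirc.2 ⟨-k, ?_⟩, ?_⟩
    · rw [hb, inv_norm_smul_hyperbolicScale_snd hk]
    · rw [hb, norm_hyperbolicScale_snd hk, zpow_neg]
    · rw [hb, hyperbolicScale_fst_mul_norm_snd hk]

theorem eqvGen_of_eq_hyperbolicScale_zpow {a b : hyperbolicRegion E} {k : ℤ}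
    (h : (b : ℝ × E) = hyperbolicScale (2 ^ k) a) :
    Relation.EqvGen (fun a b : hyperbolicRegion E => hyperbolicScale 2 (a : ℝ × E) = b) a b := by
  induction k using Int.induction_on generalizing b with
  | zero =>
    obtain rfl : b = a := Subtype.ext (by simpa using h)
    exact .refl b
  | succ k ih =>
    let c : hyperbolicRegion E :=
      ⟨_, hyperbolicScale_mem_hyperbolicRegion (zpow_pos two_pos k) a.2⟩
    refine .trans _ c _ (ih rfl) (.rel _ _ ?_)
    rw [h, zpow_add_one₀ two_ne_zero, mul_comm, ← hyperbolicScale_hyperbolicScale]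
  | pred k ih =>
    let c : hyperbolicRegion E :=
      ⟨_, hyperbolicScale_mem_hyperbolicRegion (zpow_pos two_pos (-k)) a.2⟩
    refine .trans _ c _ (ih rfl) (.symm _ _ (.rel _ _ ?_))
    rw [h, hyperbolicScale_hyperbolicScale, ← zpow_one_add₀ two_ne_zero, add_sub_cancel]

theorem hyperbolicInvariant_surjective : Function.Surjective (hyperbolicInvariant (E := E)) := by
  rintro ⟨⟨w, hw⟩, z, ⟨τ, hτ⟩⟩
  rw [mem_sphere_zero_iff_norm] at hw
  set r : ℝ := 2 ^ (Complex.arg z / (2 * π))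
  have hr : 0 < r := rpow_pos_of_pos two_pos _
  have hrw : ‖r • w‖ = r := by rw [norm_smul, hw, mul_one, norm_of_nonneg hr.le]
  have hmem : (τ / r, r • w) ∈ hyperbolicRegion E := by
    refine ⟨?_, smul_ne_zero hr.ne' (norm_ne_zero_iff.1 (hw ▸ one_ne_zero))⟩
    rw [hrw, div_pow, div_mul_cancel₀ _ (pow_ne_zero 2 hr.ne')]
    exact sq_le_one_iff_abs_le_one _ |>.2 (abs_le.2 hτ)
  refine ⟨⟨_, hmem⟩, ?_⟩
  simp only [hyperbolicInvariant, hrw, Prod.mk.injEq, Subtype.mk.injEq]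
  refine ⟨inv_smul_smul₀ hr.ne' w, ?_, div_mul_cancel₀ τ hr.ne'⟩
  rw [logb_rpow two_pos (by norm_num), mul_div_cancel₀ _ (by positivity), Circle.exp_arg]

theorem nonempty_quot_hyperbolicScale_homeomorph [ProperSpace E] :
    Nonempty (Quot (fun a b : hyperbolicRegion E => hyperbolicScale 2 (a : ℝ × E) = b) ≃ₜ
      sphere (0 : E) 1 × Circle × Icc (-1 : ℝ) 1) := by
  refine Quot.nonempty_homeomorph_of_isCompact continuous_hyperbolicInvariant
    hyperbolicInvariant_surjective
    (fun a b h => (hyperbolicInvariant_eq_iff.2 ⟨1, by rw [zpow_one, h]⟩).symm)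
    (fun a b h =>
      eqvGen_of_eq_hyperbolicScale_zpow (hyperbolicInvariant_eq_iff.1 h.symm).choose_spec)
    (K := Subtype.val ⁻¹' {p : ℝ × E | ‖p.2‖ ∈ Icc 1 2}) ?_ fun a => ?_
  · rw [Subtype.isCompact_iff, Subtype.image_preimage_coe]
    exact isCompact_hyperbolicRegion_inter_norm_snd_Icc
  · obtain ⟨k, hk⟩ := Int.exists_inv_zpow_mul_mem_Ico one_lt_two (norm_pos_iff.2 a.2.2)
    have h2k : (0 : ℝ) < 2 ^ k := zpow_pos two_pos k
    refine ⟨⟨_, hyperbolicScale_mem_hyperbolicRegion h2k a.2⟩, ?_,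
      eqvGen_of_eq_hyperbolicScale_zpow rfl⟩
    simpa [norm_hyperbolicScale_snd h2k] using Ico_subset_Icc_self hk

end HyperbolicScale

namespace EuclideanSpace

noncomputable def finSuccHomeomorph (m : ℕ) :
    EuclideanSpace ℝ (Fin (m + 1)) ≃ₜ ℝ × EuclideanSpace ℝ (Fin m) where
  toFun x := (x 0, WithLp.toLp 2 fun j => x j.succ)
  invFun p := WithLp.toLp 2 (Fin.cons p.1 p.2)
  left_inv x := by ext i; cases i using Fin.cases <;> simp
  right_inv p := by simp
  continuous_toFun := by fun_prop
  continuous_invFun := by fun_prop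

variable {m : ℕ}

@[simp] theorem finSuccHomeomorph_apply (x : EuclideanSpace ℝ (Fin (m + 1))) :
    finSuccHomeomorph m x = (x 0, WithLp.toLp 2 fun j => x j.succ) := rfl

theorem sum_filter_ne_zero_sq (x : EuclideanSpace ℝ (Fin (m + 1))) :
    ∑ i ∈ Finset.univ.filter (fun i => i ≠ 0), x i ^ 2 = ‖(finSuccHomeomorph m x).2‖ ^ 2 := by
  simp [Finset.sum_filter, Fin.sum_univ_succ, Fin.succ_ne_zero, real_norm_sq_eq]

theorem forall_ne_zero_eq_zero_iff (x : EuclideanSpace ℝ (Fin (m + 1))) :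
    (∀ i, i ≠ 0 → x i = 0) ↔ (finSuccHomeomorph m x).2 = 0 := by
  simp [Fin.forall_fin_succ, Fin.succ_ne_zero, funext_iff]

theorem finSuccHomeomorph_mem_hyperbolicRegion_iff (x : EuclideanSpace ℝ (Fin (m + 1))) :
    x ∈ {x | x 0 ^ 2 * ∑ i ∈ Finset.univ.filter (fun i => i ≠ 0), x i ^ 2 ≤ 1} \
        {x | ∀ i, i ≠ 0 → x i = 0} ↔
      finSuccHomeomorph m x ∈ hyperbolicRegion (EuclideanSpace ℝ (Fin m)) := by
  rw [mem_sdiff, mem_ofPred_eq, mem_ofPred_eq, sum_filter_ne_zero_sq, forall_ne_zero_eq_zero_iff]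
  rfl

theorem finSuccHomeomorph_scale (x : EuclideanSpace ℝ (Fin (m + 1))) :
    finSuccHomeomorph m (WithLp.toLp 2 fun i => if i = 0 then 2 * x 0 else x i / 2) =
      hyperbolicScale 2 (finSuccHomeomorph m x) := by
  ext j
  · simp [hyperbolicScale]
  · simp [hyperbolicScale, Fin.succ_ne_zero, div_eq_inv_mul]

end EuclideanSpace

theorem stmt_14_general (n : ℕ) [NeZero n]
    (bp : EuclideanSpace ℝ (Fin n) → EuclideanSpace ℝ (Fin n))
    (hbp : bp = fun x => WithLp.toLp 2 (fun i : Fin n => if i = 0 then 2 * x 0 else x i / 2))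
    (U Ns : Set (EuclideanSpace ℝ (Fin n)))
    (hU : U = {x | (x 0) ^ 2 *
      (∑ i ∈ Finset.univ.filter (fun i : Fin n => i ≠ 0), (x i) ^ 2) ≤ 1})
    (hNs : Ns = U \ {x | ∀ i : Fin n, i ≠ 0 → x i = 0}) :
    Nonempty (Quot (fun a b : ↥Ns => bp ↑a = ↑b) ≃ₜ
      (↥(Metric.sphere (0 : EuclideanSpace ℝ (Fin (n - 1))) 1) × Circle ×
        ↥(Set.Icc (-1 : ℝ) 1))) := by
  obtain ⟨m, rfl⟩ := Nat.exists_eq_add_one_of_ne_zero (NeZero.ne n)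
  subst hbp hU hNs
  let e := (EuclideanSpace.finSuccHomeomorph m).subtype
    EuclideanSpace.finSuccHomeomorph_mem_hyperbolicRegion_iff
  obtain ⟨quotModel⟩ :=
    nonempty_quot_hyperbolicScale_homeomorph (E := EuclideanSpace ℝ (Fin m))
  refine ⟨(Homeomorph.Quot.congr e fun a b => ?_).trans quotModel⟩
  rw [← (EuclideanSpace.finSuccHomeomorph m).injective.eq_iff,
    EuclideanSpace.finSuccHomeomorph_scale]
  rfl

/-- Let `n ≥ 4` and define `b₊ : ℝⁿ → ℝⁿ` by
`b₊(x₁, x₂, …, x_{n-1}, x_n) = (2x₁, x₂/2, …, x_{n-1}/2, x_n/2)`. Let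
`𝕌 = {x ∈ ℝⁿ : x₁²(x₂² + ⋯ + x_n²) ≤ 1}` and `ℕˢ = 𝕌 ∖ {x : x₂ = ⋯ = x_n = 0}` (the
complement in `𝕌` of the `x₁`-axis); the set `ℕˢ` is invariant under `b₊`, and `ℤ` acts on
`ℕˢ` by `k · x = b₊^k(x)`. Then the quotient space `ℕˢ/ℤ` is homeomorphic to the product
`S^{n-2} × S¹ × [−1, 1]`. -/
theorem stmt_14 (n : ℕ) (hn : 4 ≤ n) [NeZero n]
    (bp : EuclideanSpace ℝ (Fin n) → EuclideanSpace ℝ (Fin n))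
    (hbp : bp = fun x => WithLp.toLp 2 (fun i : Fin n => if i = 0 then 2 * x 0 else x i / 2))
    (U Ns : Set (EuclideanSpace ℝ (Fin n)))
    (hU : U = {x | (x 0) ^ 2 *
      (∑ i ∈ Finset.univ.filter (fun i : Fin n => i ≠ 0), (x i) ^ 2) ≤ 1})
    (hNs : Ns = U \ {x | ∀ i : Fin n, i ≠ 0 → x i = 0}) :
    Nonempty (Quot (fun a b : ↥Ns => bp ↑a = ↑b) ≃ₜ
      (↥(Metric.sphere (0 : EuclideanSpace ℝ (Fin (n - 1))) 1) × Circle ×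
        ↥(Set.Icc (-1 : ℝ) 1))) :=
  stmt_14_general n bp hbp U Ns hU hNs
end
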